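/- Let K be a complex Hilbert space and Γ : K → K an antiunitary involution. Let D₁, D₂ ⊆ K be complex-linear subspaces with Γ D_j = D_j, and let T_j : D_j → K (j = 1,2) be complex-linear maps satisfying T_j Γ = Γ T_j on D_j. Let D_T := { v ∈ K : (1+Γ)v/2 ∈ D₂ and (1−Γ)v/2 ∈ D₁ } and T v := T₂((1+Γ)v/2) + T₁((1−Γ)v/2) for v ∈ D_T. Then T is symplectic, i.e. Im⟨Tu, Tv⟩ = Im⟨u, v⟩ for all u, v ∈ D_T, if and only if ⟨T₁ u₁, T₂ u₂⟩ = ⟨u₁, u₂⟩ for all u₁ ∈ D₁ and u₂ ∈ D₂. -/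

import Mathlib

open Complex

section

variable {K : Type*} [NormedAddCommGroup K] [InnerProductSpace ℂ K]

/-- The "even part" `(1+Γ)v/2` of `v` with respect to the involution `Γ`. -/
noncomputable def evenP (Γ : K → K) (v : K) : K := ((1 : ℂ)/2) • (v + Γ v)

/-- The "odd part" `(1−Γ)v/2` of `v` with respect to the involution `Γ`. -/
noncomputable def oddP (Γ : K → K) (v : K) : K := ((1 : ℂ)/2) • (v - Γ v)

/-- The domain `D_T := { v : (1+Γ)v/2 ∈ D₂ and (1−Γ)v/2 ∈ D₁ }`. -/
def DT (Γ : K → K) (D₁ D₂ : Set K) : Set K :=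
  {v | evenP Γ v ∈ D₂ ∧ oddP Γ v ∈ D₁}

/-- The combined operator `T v := T₂((1+Γ)v/2) + T₁((1−Γ)v/2)`. -/
noncomputable def Tc (Γ T₁ T₂ : K → K) (v : K) : K := T₂ (evenP Γ v) + T₁ (oddP Γ v)

/-- Lemma 3.1 (symplectic part): `T = T₂ (1+Γ)/2 + T₁ (1−Γ)/2` is symplectic on `D_T`,
i.e. `Im⟨Tu, Tv⟩ = Im⟨u, v⟩` for `u, v ∈ D_T`, iff
`⟨T₁u₁, T₂u₂⟩ = ⟨u₁, u₂⟩` for all `u₁ ∈ D₁`, `u₂ ∈ D₂`. -/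
theorem stmt7
    (Γ : K → K)
    (hΓadd : ∀ u v : K, Γ (u + v) = Γ u + Γ v)
    (hΓsmul : ∀ (c : ℂ) (v : K), Γ (c • v) = (starRingEnd ℂ) c • Γ v)
    (hΓnorm : ∀ v : K, ‖Γ v‖ = ‖v‖)
    (hΓinv : ∀ v : K, Γ (Γ v) = v)
    (D₁ D₂ : Submodule ℂ K)
    (hΓD₁ : Γ '' (D₁ : Set K) = (D₁ : Set K))
    (hΓD₂ : Γ '' (D₂ : Set K) = (D₂ : Set K))
    (T₁ T₂ : K → K)
    (hT₁add : ∀ u ∈ D₁, ∀ v ∈ D₁, T₁ (u + v) = T₁ u + T₁ v)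
    (hT₁smul : ∀ (c : ℂ), ∀ v ∈ D₁, T₁ (c • v) = c • T₁ v)
    (hT₁Γ : ∀ v ∈ D₁, T₁ (Γ v) = Γ (T₁ v))
    (hT₂add : ∀ u ∈ D₂, ∀ v ∈ D₂, T₂ (u + v) = T₂ u + T₂ v)
    (hT₂smul : ∀ (c : ℂ), ∀ v ∈ D₂, T₂ (c • v) = c • T₂ v)
    (hT₂Γ : ∀ v ∈ D₂, T₂ (Γ v) = Γ (T₂ v)) :
    (∀ u ∈ DT Γ (D₁ : Set K) (D₂ : Set K), ∀ v ∈ DT Γ (D₁ : Set K) (D₂ : Set K),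
        (inner ℂ (Tc Γ T₁ T₂ u) (Tc Γ T₁ T₂ v) : ℂ).im = (inner ℂ u v : ℂ).im)
      ↔ (∀ u₁ ∈ D₁, ∀ u₂ ∈ D₂, (inner ℂ (T₁ u₁) (T₂ u₂) : ℂ) = inner ℂ u₁ u₂) := by
  -- Γ preserves real parts of inner ℂ products
  have hre : ∀ x y : K, (inner ℂ (Γ x) (Γ y) : ℂ).re = (inner ℂ x y : ℂ).re := by
    intro x y
    have h1 := norm_add_sq (𝕜 := ℂ) (Γ x) (Γ y)
    have h2 := norm_add_sq (𝕜 := ℂ) x y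
    rw [← hΓadd, hΓnorm, hΓnorm, hΓnorm] at h1
    simp only [RCLike.re_to_complex] at h1 h2
    nlinarith [h1, h2]
  -- Γ negates imaginary parts of inner ℂ products
  have him : ∀ x y : K, (inner ℂ (Γ x) (Γ y) : ℂ).im = -(inner ℂ x y : ℂ).im := by
    intro x y
    have h := hre x ((-Complex.I) • y)
    rw [hΓsmul] at h
    simp only [map_neg, Complex.conj_I, neg_neg] at h
    rw [inner_smul_right, inner_smul_right] at h
    simp only [Complex.mul_re, Complex.neg_re, Complex.I_re, Complex.neg_im,
      Complex.I_im] at h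
    linarith
  -- consequences on Γ-fixed / Γ-antifixed vectors
  have hfixim : ∀ x y : K, Γ x = x → Γ y = y → (inner ℂ x y : ℂ).im = 0 := by
    intro x y hx hy
    have := him x y
    rw [hx, hy] at this
    linarith
  have hantiim : ∀ x y : K, Γ x = -x → Γ y = -y → (inner ℂ x y : ℂ).im = 0 := by
    intro x y hx hy
    have := him x y
    rw [hx, hy, inner_neg_neg] at this
    linarith
  have hmixre : ∀ x y : K, Γ x = -x → Γ y = y → (inner ℂ x y : ℂ).re = 0 := by
    intro x y hx hy
    have := hre x y
    rw [hx, hy, inner_neg_left] at this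
    simp only [Complex.neg_re] at this
    linarith
  -- basic algebra with Γ
  have hΓneg : ∀ v : K, Γ (-v) = -Γ v := by
    intro v
    have := hΓsmul (-1) v
    simpa using this
  have hΓ0 : Γ (0 : K) = 0 := by
    have := hΓsmul 0 0
    simpa using this
  have heven : ∀ v : K, Γ (evenP Γ v) = evenP Γ v := by
    intro v
    rw [evenP, hΓsmul, hΓadd, hΓinv]
    rw [show (starRingEnd ℂ) ((1:ℂ)/2) = (1:ℂ)/2 by rw [map_div₀, map_one, map_ofNat], add_comm]
  have hodd : ∀ v : K, Γ (oddP Γ v) = -oddP Γ v := by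
    intro v
    rw [oddP, sub_eq_add_neg, hΓsmul, hΓadd, hΓneg, hΓinv]
    rw [show (starRingEnd ℂ) ((1:ℂ)/2) = (1:ℂ)/2 by rw [map_div₀, map_one, map_ofNat], ← smul_neg]
    congr 1
    abel
  have hsum : ∀ v : K, evenP Γ v + oddP Γ v = v := by
    intro v
    rw [evenP, oddP, ← smul_add]
    rw [show v + Γ v + (v - Γ v) = (2:ℂ) • v by rw [two_smul]; abel, smul_smul]
    norm_num
  -- even/odd parts of fixed/antifixed vectors
  have heven1 : ∀ v : K, Γ v = v → evenP Γ v = v := by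
    intro v h
    rw [evenP, h, ← two_smul ℂ, smul_smul]
    norm_num
  have heven0 : ∀ v : K, Γ v = -v → evenP Γ v = 0 := by
    intro v h
    rw [evenP, h]
    simp
  have hodd1 : ∀ v : K, Γ v = -v → oddP Γ v = v := by
    intro v h
    rw [oddP, h, sub_neg_eq_add, ← two_smul ℂ, smul_smul]
    norm_num
  have hodd0 : ∀ v : K, Γ v = v → oddP Γ v = 0 := by
    intro v h
    rw [oddP, h]
    simp
  -- T's map 0 to 0 and commute with negation on their domains
  have hT₁0 : T₁ (0 : K) = 0 := by
    have := hT₁smul 0 0 D₁.zero_mem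
    simpa using this
  have hT₂0 : T₂ (0 : K) = 0 := by
    have := hT₂smul 0 0 D₂.zero_mem
    simpa using this
  have hT₁neg : ∀ v ∈ D₁, T₁ (-v) = -T₁ v := by
    intro v hv
    have := hT₁smul (-1) v hv
    simpa using this
  -- Γ preserves the domains
  have hΓmem₁ : ∀ v ∈ D₁, Γ v ∈ D₁ := by
    intro v hv
    have : Γ v ∈ Γ '' (D₁ : Set K) := ⟨v, hv, rfl⟩
    rwa [hΓD₁] at this
  have hΓmem₂ : ∀ v ∈ D₂, Γ v ∈ D₂ := by
    intro v hv
    have : Γ v ∈ Γ '' (D₂ : Set K) := ⟨v, hv, rfl⟩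
    rwa [hΓD₂] at this
  have hmem₁ : ∀ v ∈ D₁, evenP Γ v ∈ D₁ ∧ oddP Γ v ∈ D₁ := by
    intro v hv
    exact ⟨D₁.smul_mem _ (D₁.add_mem hv (hΓmem₁ v hv)),
      D₁.smul_mem _ (D₁.sub_mem hv (hΓmem₁ v hv))⟩
  have hmem₂ : ∀ v ∈ D₂, evenP Γ v ∈ D₂ ∧ oddP Γ v ∈ D₂ := by
    intro v hv
    exact ⟨D₂.smul_mem _ (D₂.add_mem hv (hΓmem₂ v hv)),
      D₂.smul_mem _ (D₂.sub_mem hv (hΓmem₂ v hv))⟩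
  constructor
  · -- symplectic ⟹ compatibility
    intro hsym
    -- core case: a antifixed in D₁, b fixed in D₂
    have L : ∀ a ∈ D₁, Γ a = -a → ∀ b ∈ D₂, Γ b = b →
        (inner ℂ (T₁ a) (T₂ b) : ℂ) = inner ℂ a b := by
      intro a ha hΓa b hb hΓb
      have haDT : a ∈ DT Γ (D₁ : Set K) (D₂ : Set K) :=
        ⟨by rw [heven0 a hΓa]; exact D₂.zero_mem, by rw [hodd1 a hΓa]; exact ha⟩
      have hbDT : b ∈ DT Γ (D₁ : Set K) (D₂ : Set K) :=
        ⟨by rw [heven1 b hΓb]; exact hb, by rw [hodd0 b hΓb]; exact D₁.zero_mem⟩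
      have hTa : Tc Γ T₁ T₂ a = T₁ a := by
        rw [Tc, heven0 a hΓa, hodd1 a hΓa, hT₂0, zero_add]
      have hTb : Tc Γ T₁ T₂ b = T₂ b := by
        rw [Tc, heven1 b hΓb, hodd0 b hΓb, hT₁0, add_zero]
      have himeq := hsym a haDT b hbDT
      rw [hTa, hTb] at himeq
      have hΓTa : Γ (T₁ a) = -T₁ a := by
        rw [← hT₁Γ a ha, hΓa, hT₁neg a ha]
      have hΓTb : Γ (T₂ b) = T₂ b := by rw [← hT₂Γ b hb, hΓb]
      apply Complex.ext
      · rw [hmixre _ _ hΓTa hΓTb, hmixre _ _ hΓa hΓb]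
      · exact himeq
    intro u₁ h₁ u₂ h₂
    obtain ⟨he₁, ho₁⟩ := hmem₁ u₁ h₁
    obtain ⟨he₂, ho₂⟩ := hmem₂ u₂ h₂
    have hΓe₁ : Γ (evenP Γ u₁) = evenP Γ u₁ := heven u₁
    have hΓo₁ : Γ (oddP Γ u₁) = -oddP Γ u₁ := hodd u₁
    have hΓe₂ : Γ (evenP Γ u₂) = evenP Γ u₂ := heven u₂
    have hΓo₂ : Γ (oddP Γ u₂) = -oddP Γ u₂ := hodd u₂
    have hIe₁ : Γ (Complex.I • evenP Γ u₁) = -(Complex.I • evenP Γ u₁) := by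
      rw [hΓsmul, Complex.conj_I, hΓe₁, neg_smul]
    have hIo₂ : Γ (Complex.I • oddP Γ u₂) = Complex.I • oddP Γ u₂ := by
      rw [hΓsmul, Complex.conj_I, hΓo₂, neg_smul, smul_neg, neg_neg]
    have hInz : (starRingEnd ℂ) Complex.I ≠ 0 := by
      rw [Complex.conj_I]; simp [Complex.I_ne_zero]
    -- case (o₁, e₂)
    have cA : (inner ℂ (T₁ (oddP Γ u₁)) (T₂ (evenP Γ u₂)) : ℂ)
        = inner ℂ (oddP Γ u₁) (evenP Γ u₂) := L _ ho₁ hΓo₁ _ he₂ hΓe₂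
    -- case (e₁, e₂)
    have cB : (inner ℂ (T₁ (evenP Γ u₁)) (T₂ (evenP Γ u₂)) : ℂ)
        = inner ℂ (evenP Γ u₁) (evenP Γ u₂) := by
      have h := L _ (D₁.smul_mem Complex.I he₁) hIe₁ _ he₂ hΓe₂
      rw [hT₁smul _ _ he₁, inner_smul_left, inner_smul_left] at h
      exact mul_left_cancel₀ hInz h
    -- case (o₁, o₂)
    have cC : (inner ℂ (T₁ (oddP Γ u₁)) (T₂ (oddP Γ u₂)) : ℂ)
        = inner ℂ (oddP Γ u₁) (oddP Γ u₂) := by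
      have h := L _ ho₁ hΓo₁ _ (D₂.smul_mem Complex.I ho₂) hIo₂
      rw [hT₂smul _ _ ho₂, inner_smul_right, inner_smul_right] at h
      exact mul_left_cancel₀ Complex.I_ne_zero h
    -- case (e₁, o₂)
    have cD : (inner ℂ (T₁ (evenP Γ u₁)) (T₂ (oddP Γ u₂)) : ℂ)
        = inner ℂ (evenP Γ u₁) (oddP Γ u₂) := by
      have h := L _ (D₁.smul_mem Complex.I he₁) hIe₁ _ (D₂.smul_mem Complex.I ho₂) hIo₂
      rw [hT₁smul _ _ he₁, hT₂smul _ _ ho₂, inner_smul_left, inner_smul_right,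
        inner_smul_left, inner_smul_right] at h
      exact mul_left_cancel₀ Complex.I_ne_zero (mul_left_cancel₀ hInz h)
    have hu₁eq : evenP Γ u₁ + oddP Γ u₁ = u₁ := hsum u₁
    have hu₂eq : evenP Γ u₂ + oddP Γ u₂ = u₂ := hsum u₂
    have hT₁u : T₁ u₁ = T₁ (evenP Γ u₁) + T₁ (oddP Γ u₁) := by
      rw [← hT₁add _ he₁ _ ho₁, hu₁eq]
    have hT₂u : T₂ u₂ = T₂ (evenP Γ u₂) + T₂ (oddP Γ u₂) := by
      rw [← hT₂add _ he₂ _ ho₂, hu₂eq]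
    calc (inner ℂ (T₁ u₁) (T₂ u₂) : ℂ)
        = inner ℂ (T₁ (evenP Γ u₁) + T₁ (oddP Γ u₁))
            (T₂ (evenP Γ u₂) + T₂ (oddP Γ u₂)) := by rw [← hT₁u, ← hT₂u]
      _ = inner ℂ (evenP Γ u₁) (evenP Γ u₂) + inner ℂ (evenP Γ u₁) (oddP Γ u₂)
            + (inner ℂ (oddP Γ u₁) (evenP Γ u₂) + inner ℂ (oddP Γ u₁) (oddP Γ u₂)) := by
          rw [inner_add_left, inner_add_right, inner_add_right, cA, cB, cC, cD]
      _ = inner ℂ (evenP Γ u₁ + oddP Γ u₁) (evenP Γ u₂ + oddP Γ u₂) := by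
          rw [inner_add_left, inner_add_right, inner_add_right]
      _ = inner ℂ u₁ u₂ := by rw [hu₁eq, hu₂eq]
  · -- compatibility ⟹ symplectic
    intro hT u hu v hv
    obtain ⟨hu₂, hu₁⟩ := hu
    obtain ⟨hv₂, hv₁⟩ := hv
    have hΓT₂u : Γ (T₂ (evenP Γ u)) = T₂ (evenP Γ u) := by
      rw [← hT₂Γ _ hu₂, heven]
    have hΓT₂v : Γ (T₂ (evenP Γ v)) = T₂ (evenP Γ v) := by
      rw [← hT₂Γ _ hv₂, heven]
    have hΓT₁u : Γ (T₁ (oddP Γ u)) = -T₁ (oddP Γ u) := by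
      rw [← hT₁Γ _ hu₁, hodd, hT₁neg _ hu₁]
    have hΓT₁v : Γ (T₁ (oddP Γ v)) = -T₁ (oddP Γ v) := by
      rw [← hT₁Γ _ hv₁, hodd, hT₁neg _ hv₁]
    have hmid1 : (inner ℂ (T₁ (oddP Γ u)) (T₂ (evenP Γ v)) : ℂ)
        = inner ℂ (oddP Γ u) (evenP Γ v) := hT _ hu₁ _ hv₂
    have hmid2 : (inner ℂ (T₂ (evenP Γ u)) (T₁ (oddP Γ v)) : ℂ)
        = inner ℂ (evenP Γ u) (oddP Γ v) := by
      rw [← inner_conj_symm (T₂ (evenP Γ u)) (T₁ (oddP Γ v)), hT _ hv₁ _ hu₂,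
        inner_conj_symm]
    have z1 : (inner ℂ (T₂ (evenP Γ u)) (T₂ (evenP Γ v)) : ℂ).im = 0 :=
      hfixim _ _ hΓT₂u hΓT₂v
    have z2 : (inner ℂ (T₁ (oddP Γ u)) (T₁ (oddP Γ v)) : ℂ).im = 0 :=
      hantiim _ _ hΓT₁u hΓT₁v
    have z3 : (inner ℂ (evenP Γ u) (evenP Γ v) : ℂ).im = 0 :=
      hfixim _ _ (heven u) (heven v)
    have z4 : (inner ℂ (oddP Γ u) (oddP Γ v) : ℂ).im = 0 :=
      hantiim _ _ (hodd u) (hodd v)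
    rw [show (inner ℂ u v : ℂ) = inner ℂ (evenP Γ u + oddP Γ u) (evenP Γ v + oddP Γ v) from
      by rw [hsum u, hsum v]]
    rw [Tc, Tc, inner_add_left, inner_add_right, inner_add_right,
      inner_add_left, inner_add_right, inner_add_right]
    simp only [Complex.add_im]
    rw [hmid1, hmid2, z1, z2, z3, z4]

end
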